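/- Let j(u) = (1/2)⟨u, Qu⟩ − ⟨b, u⟩ with Q self-adjoint and Q ≥ α I for some α > 0 on a Hilbert space H, and let R_ε : H → ℝ be convex and continuous for each ε ≥ 0, with 0 ≤ R_ε(u) − R_0(u) ≤ βε c for all u and some constants β, c ≥ 0. If u_ε minimizes j + R_ε and u_0 minimizes j + R_0 over a closed convex set U_ad, then ‖u_ε − u_0‖² ≤ 2 ε β c / α. -/
import Mathlib


open scoped RealInnerProductSpace

theorem smoothed_minimizer_convergence {H : Type*} [NormedAddCommGroup H]
    [InnerProductSpace ℝ H] (Q : H →L[ℝ] H)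
    (hQ_selfadj : ∀ x y : H, ⟪Q x, y⟫ = ⟪x, Q y⟫)
    (α : ℝ) (hα : 0 < α) (hQ_coerc : ∀ u : H, α * ‖u‖ ^ 2 ≤ ⟪u, Q u⟫)
    (b : H) (β c ε : ℝ) (hβ : 0 ≤ β) (hc : 0 ≤ c) (hε : 0 ≤ ε)
    (R0 Reps : H → ℝ)
    (hR0_convex : ConvexOn ℝ Set.univ R0) (hR0_cont : Continuous R0)
    (hReps_convex : ConvexOn ℝ Set.univ Reps) (hReps_cont : Continuous Reps)
    (hgap : ∀ u, 0 ≤ Reps u - R0 u ∧ Reps u - R0 u ≤ β * ε * c)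
    (Uad : Set H) (hU_closed : IsClosed Uad) (hU_convex : Convex ℝ Uad)
    (ueps u0 : H) (hueps_mem : ueps ∈ Uad) (hu0_mem : u0 ∈ Uad)
    (hueps : ∀ v ∈ Uad,
      (1 / 2) * ⟪ueps, Q ueps⟫ - ⟪b, ueps⟫ + Reps ueps
        ≤ (1 / 2) * ⟪v, Q v⟫ - ⟪b, v⟫ + Reps v)
    (hu0 : ∀ v ∈ Uad,
      (1 / 2) * ⟪u0, Q u0⟫ - ⟪b, u0⟫ + R0 u0
        ≤ (1 / 2) * ⟪v, Q v⟫ - ⟪b, v⟫ + R0 v) :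
    ‖ueps - u0‖ ^ 2 ≤ 2 * ε * β * c / α := by
  set m : H := (1/2 : ℝ) • ueps + (1/2 : ℝ) • u0 with hm_def
  have hm_mem : m ∈ Uad :=
    hU_convex hueps_mem hu0_mem (by norm_num) (by norm_num) (by norm_num)
  have h1 := hueps m hm_mem
  have h2 := hu0 m hm_mem
  have hconv1 : Reps m ≤ (1/2) * Reps ueps + (1/2) * Reps u0 := by
    have := hReps_convex.2 (Set.mem_univ ueps) (Set.mem_univ u0)
      (by norm_num : (0:ℝ) ≤ 1/2) (by norm_num : (0:ℝ) ≤ 1/2) (by norm_num)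
    simpa [hm_def, smul_eq_mul, one_div] using this
  have hconv2 : R0 m ≤ (1/2) * R0 ueps + (1/2) * R0 u0 := by
    have := hR0_convex.2 (Set.mem_univ ueps) (Set.mem_univ u0)
      (by norm_num : (0:ℝ) ≤ 1/2) (by norm_num : (0:ℝ) ≤ 1/2) (by norm_num)
    simpa [hm_def, smul_eq_mul, one_div] using this
  -- symmetry of the cross term
  have hsym : ⟪u0, Q ueps⟫ = ⟪ueps, Q u0⟫ := by
    rw [real_inner_comm, hQ_selfadj]
  -- expand quadratic terms
  have hbm : ⟪b, m⟫ = (1/2) * ⟪b, ueps⟫ + (1/2) * ⟪b, u0⟫ := by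
    simp [hm_def, inner_add_right, inner_smul_right]
  have hqm : ⟪m, Q m⟫ = (1/4) * ⟪ueps, Q ueps⟫ + (1/2) * ⟪ueps, Q u0⟫
      + (1/4) * ⟪u0, Q u0⟫ := by
    simp only [hm_def, map_add, map_smul, inner_add_left, inner_add_right,
      inner_smul_left, inner_smul_right, RCLike.conj_to_real]
    rw [hsym]; ring
  have hqd : ⟪ueps - u0, Q (ueps - u0)⟫
      = ⟪ueps, Q ueps⟫ - 2 * ⟪ueps, Q u0⟫ + ⟪u0, Q u0⟫ := by
    simp only [map_sub, inner_sub_left, inner_sub_right]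
    rw [hsym]; ring
  have hg1 := (hgap ueps).1
  have hg2 := (hgap u0).2
  have key : ⟪ueps - u0, Q (ueps - u0)⟫ ≤ 2 * (β * ε * c) := by
    rw [hqd]
    nlinarith [h1, h2, hconv1, hconv2, hqm, hbm, hg1, hg2]
  have hcoer := hQ_coerc (ueps - u0)
  have : α * ‖ueps - u0‖ ^ 2 ≤ 2 * (β * ε * c) := le_trans hcoer key
  rw [le_div_iff₀ hα]
  nlinarith [this]
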